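/- Čebyšev's inequality for Riemann–Stieltjes Δ-integrals: if f_1 and f_2 are similarly ordered ((f_1(t)−f_1(s))(f_2(t)−f_2(s)) ≥ 0 for all t,s) and p ≥ 0, then (∫_a^b p Δg)(∫_a^b p·f_1·f_2 Δg) ≥ (∫_a^b p·f_1 Δg)(∫_a^b p·f_2 Δg). -/

import Mathlib

open Set

/-- A partition `a = t 0 < t 1 < ... < t n = b` of `[a,b] ∩ T`. -/
structure TSPartition (T : Set ℝ) (a b : ℝ) where
  n : ℕ
  t : Fin (n + 1) → ℝ
  strictMono : StrictMono t
  mem : ∀ i, t i ∈ T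
  first : t 0 = a
  last : t (Fin.last n) = b

/-- The set of points of a partition. -/
def TSPartition.points {T : Set ℝ} {a b : ℝ} (P : TSPartition T a b) : Set ℝ :=
  Set.range P.t

/-- A selection of points for a partition: `x i ∈ [t i, t (i+1)) ∩ T`. -/
def IsSelection {T : Set ℝ} {a b : ℝ} (P : TSPartition T a b) (X : Fin P.n → ℝ) : Prop :=
  ∀ i : Fin P.n, X i ∈ T ∧ P.t i.castSucc ≤ X i ∧ X i < P.t i.succ

/-- The Riemann–Stieltjes Δ-sum `Σ f(x i)(g(t (i+1)) − g(t i))`. -/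
def RSsum {T : Set ℝ} {a b : ℝ} (f g : ℝ → ℝ) (P : TSPartition T a b)
    (X : Fin P.n → ℝ) : ℝ :=
  ∑ i : Fin P.n, f (X i) * (g (P.t i.succ) - g (P.t i.castSucc))

/-- `f` is Riemann–Stieltjes Δ-integrable w.r.t. `g` on `[a,b] ∩ T` with value `I`. -/
def IsRSIntegral (T : Set ℝ) (a b : ℝ) (f g : ℝ → ℝ) (I : ℝ) : Prop :=
  ∀ ε > 0, ∃ P₀ : TSPartition T a b, ∀ P : TSPartition T a b,
    P₀.points ⊆ P.points → ∀ X : Fin P.n → ℝ, IsSelection P X →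
      |RSsum f g P X - I| < ε

/-- Forward jump operator `σ` of a time scale. -/
noncomputable def tsSigma (T : Set ℝ) (t : ℝ) : ℝ := sInf {s | s ∈ T ∧ t < s}

/-- Backward jump operator `ρ` of a time scale. -/
noncomputable def tsRho (T : Set ℝ) (t : ℝ) : ℝ := sSup {s | s ∈ T ∧ s < t}

/-- `f` is rd-continuous on `[a,b] ∩ T`: continuous (within the time scale) at
right-dense points, and possessing finite left-sided limits at left-dense points. -/
def RdContinuousOn (T : Set ℝ) (a b : ℝ) (f : ℝ → ℝ) : Prop :=
  (∀ t ∈ Set.Icc a b ∩ T, tsSigma T t = t →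
      ContinuousWithinAt f (Set.Icc a b ∩ T) t) ∧
  (∀ t ∈ Set.Icc a b ∩ T, tsRho T t = t →
      ∃ L, Filter.Tendsto f (nhdsWithin t ((Set.Icc a b ∩ T) ∩ Set.Iio t)) (nhds L))

/-- Double Riemann–Stieltjes Δ-sum. -/
def RSsum2 {T₁ T₂ : Set ℝ} {a b c d : ℝ} (f : ℝ → ℝ → ℝ) (g₁ g₂ : ℝ → ℝ)
    (P : TSPartition T₁ a b) (Q : TSPartition T₂ c d)
    (X : Fin P.n → ℝ) (Y : Fin Q.n → ℝ) : ℝ :=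
  ∑ i : Fin P.n, ∑ j : Fin Q.n,
    f (X i) (Y j) * (g₁ (P.t i.succ) - g₁ (P.t i.castSucc)) *
      (g₂ (Q.t j.succ) - g₂ (Q.t j.castSucc))

/-- `f` is double Riemann–Stieltjes Δ-integrable w.r.t. `g₁, g₂` on
`([a,b) ∩ T₁) × ([c,d) ∩ T₂)` with value `I`. -/
def IsRSIntegral2 (T₁ T₂ : Set ℝ) (a b c d : ℝ) (f : ℝ → ℝ → ℝ)
    (g₁ g₂ : ℝ → ℝ) (I : ℝ) : Prop :=
  ∀ ε > 0, ∃ (P₀ : TSPartition T₁ a b) (Q₀ : TSPartition T₂ c d),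
    ∀ (P : TSPartition T₁ a b) (Q : TSPartition T₂ c d),
      P₀.points ⊆ P.points → Q₀.points ⊆ Q.points →
      ∀ (X : Fin P.n → ℝ) (Y : Fin Q.n → ℝ),
        IsSelection P X → IsSelection Q Y →
          |RSsum2 f g₁ g₂ P Q X Y - I| < ε

/-- Lower Darboux–Stieltjes sum. -/
noncomputable def lowerDS {T : Set ℝ} {a b : ℝ} (f g : ℝ → ℝ)
    (P : TSPartition T a b) : ℝ :=
  ∑ i : Fin P.n,
    sInf (f '' (Set.Ico (P.t i.castSucc) (P.t i.succ) ∩ T)) *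
      (g (P.t i.succ) - g (P.t i.castSucc))

/-- Upper Darboux–Stieltjes sum. -/
noncomputable def upperDS {T : Set ℝ} {a b : ℝ} (f g : ℝ → ℝ)
    (P : TSPartition T a b) : ℝ :=
  ∑ i : Fin P.n,
    sSup (f '' (Set.Ico (P.t i.castSucc) (P.t i.succ) ∩ T)) *
      (g (P.t i.succ) - g (P.t i.castSucc))

/-!
For a Riemann–Stieltjes sum with tags `xᵢ`, put `cᵢ = p(xᵢ)(g(tᵢ₊₁) - g(tᵢ)) ≥ 0`,
`uᵢ = f₁(xᵢ)`, `vᵢ = f₂(xᵢ)`. Then `∑ᵢ ∑ⱼ cᵢ cⱼ (uᵢ - uⱼ)(vᵢ - vⱼ) ≥ 0` is twice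
`(∑ cᵢ)(∑ cᵢuᵢvᵢ) - (∑ cᵢuᵢ)(∑ cᵢvᵢ)`, so Čebyšev's inequality holds for the sums. Since two
partitions have a common refinement, "refining the partition" is a proper filter on tagged
partitions, along which all four sums converge to their integrals; the inequality passes to the
limit.
-/

open Filter Topology

theorem Finset.sum_mul_sum_le_sum_mul_sum_of_similarlyOrdered {ι R : Type*} [CommRing R]
    [LinearOrder R] [IsStrictOrderedRing R] (s : Finset ι) (c u v : ι → R)
    (hc : ∀ i ∈ s, 0 ≤ c i) (huv : ∀ i ∈ s, ∀ j ∈ s, 0 ≤ (u i - u j) * (v i - v j)) :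
    (∑ i ∈ s, c i * u i) * (∑ i ∈ s, c i * v i) ≤
      (∑ i ∈ s, c i) * ∑ i ∈ s, c i * (u i * v i) := by
  have hnonneg : 0 ≤ ∑ i ∈ s, ∑ j ∈ s, c i * c j * ((u i - u j) * (v i - v j)) :=
    Finset.sum_nonneg fun i hi => Finset.sum_nonneg fun j hj =>
      mul_nonneg (mul_nonneg (hc i hi) (hc j hj)) (huv i hi j hj)
  have hexpand : ∑ i ∈ s, ∑ j ∈ s, c i * c j * ((u i - u j) * (v i - v j)) =
      (∑ i ∈ s, c i) * (∑ j ∈ s, c j * (u j * v j)) +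
        (∑ i ∈ s, c i * (u i * v i)) * (∑ j ∈ s, c j) -
        (∑ i ∈ s, c i * u i) * (∑ j ∈ s, c j * v j) -
        (∑ i ∈ s, c i * v i) * (∑ j ∈ s, c j * u j) := by
    simp only [Finset.sum_mul_sum, ← Finset.sum_add_distrib, ← Finset.sum_sub_distrib]
    exact Finset.sum_congr rfl fun i _ => Finset.sum_congr rfl fun j _ => by ring
  linarith

namespace TSPartition

variable {T : Set ℝ} {a b : ℝ}

theorem t_mem_Icc (P : TSPartition T a b) (i : Fin (P.n + 1)) : P.t i ∈ Icc a b :=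
  ⟨P.first.symm.trans_le (P.strictMono.monotone (Fin.zero_le i)),
    (P.strictMono.monotone (Fin.le_last i)).trans_eq P.last⟩

noncomputable def ofFinset (s : Finset ℝ) (hsT : ↑s ⊆ T) (hs : ↑s ⊆ Icc a b) (ha : a ∈ s)
    (hb : b ∈ s) : TSPartition T a b :=
  let e := s.orderEmbOfFin (Nat.succ_pred_eq_of_pos (Finset.card_pos.2 ⟨a, ha⟩)).symm
  have he : ∀ i, e i ∈ s := Finset.orderEmbOfFin_mem _ _
  have hrange : ∀ x ∈ s, ∃ i, e i = x := fun x hx => by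
    rwa [← Finset.mem_coe, ← Finset.range_orderEmbOfFin, Set.mem_range] at hx
  { n := s.card - 1
    t := e
    strictMono := e.strictMono
    mem := fun i => hsT (he i)
    first := by
      obtain ⟨i, hi⟩ := hrange a ha
      exact le_antisymm (hi ▸ e.monotone (Fin.zero_le i)) (hs (he 0)).1
    last := by
      obtain ⟨i, hi⟩ := hrange b hb
      exact le_antisymm (hs (he _)).2 (hi ▸ e.monotone (Fin.le_last i)) }

theorem points_ofFinset (s : Finset ℝ) (hsT : ↑s ⊆ T) (hs : ↑s ⊆ Icc a b) (ha : a ∈ s)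
    (hb : b ∈ s) : (ofFinset s hsT hs ha hb).points = s :=
  Finset.range_orderEmbOfFin _ _

theorem coe_image_t (P : TSPartition T a b) : (↑(Finset.univ.image P.t) : Set ℝ) = P.points := by
  rw [Finset.coe_image, Finset.coe_univ, Set.image_univ, points]

theorem exists_refinement (P Q : TSPartition T a b) :
    ∃ R : TSPartition T a b, P.points ⊆ R.points ∧ Q.points ⊆ R.points := by
  let s := Finset.univ.image P.t ∪ Finset.univ.image Q.t
  have hs : (↑s : Set ℝ) = P.points ∪ Q.points := by rw [Finset.coe_union, coe_image_t, coe_image_t]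
  have hsT : ↑s ⊆ T := hs ▸ union_subset (range_subset_iff.2 P.mem) (range_subset_iff.2 Q.mem)
  have hsIcc : ↑s ⊆ Icc a b :=
    hs ▸ union_subset (range_subset_iff.2 P.t_mem_Icc) (range_subset_iff.2 Q.t_mem_Icc)
  have ha : a ∈ s := by rw [← Finset.mem_coe, hs]; exact Or.inl ⟨0, P.first⟩
  have hb : b ∈ s := by rw [← Finset.mem_coe, hs]; exact Or.inl ⟨Fin.last _, P.last⟩
  refine ⟨ofFinset s hsT hsIcc ha hb, ?_⟩
  rw [points_ofFinset, hs]
  exact ⟨subset_union_left, subset_union_right⟩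

theorem isSelection_left (P : TSPartition T a b) : IsSelection P fun i => P.t i.castSucc :=
  fun i => ⟨P.mem _, le_rfl, P.strictMono (Fin.castSucc_lt_succ (i := i))⟩

theorem increment_nonneg (P : TSPartition T a b) {g : ℝ → ℝ} (hg : MonotoneOn g (Icc a b ∩ T))
    (i : Fin P.n) : 0 ≤ g (P.t i.succ) - g (P.t i.castSucc) :=
  sub_nonneg.2 <| hg ⟨P.t_mem_Icc _, P.mem _⟩ ⟨P.t_mem_Icc _, P.mem _⟩
    (P.strictMono (Fin.castSucc_lt_succ (i := i))).le

abbrev Tagged (T : Set ℝ) (a b : ℝ) : Type :=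
  Σ P : TSPartition T a b, {X : Fin P.n → ℝ // IsSelection P X}

def refinementFilter (T : Set ℝ) (a b : ℝ) : Filter (Tagged T a b) :=
  ⨅ P₀ : TSPartition T a b, 𝓟 {τ | P₀.points ⊆ τ.1.points}

instance [Nonempty (TSPartition T a b)] : (refinementFilter T a b).NeBot := by
  refine iInf_neBot_of_directed' (fun P Q => ?_) fun P => ?_
  · obtain ⟨R, hPR, hQR⟩ := exists_refinement P Q
    exact ⟨R, principal_mono.2 fun τ hτ => hPR.trans hτ,
      principal_mono.2 fun τ hτ => hQR.trans hτ⟩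
  · exact principal_neBot_iff.2 ⟨⟨P, _, P.isSelection_left⟩, subset_refl P.points⟩

end TSPartition

open TSPartition in
theorem IsRSIntegral.tendsto {T : Set ℝ} {a b : ℝ} {f g : ℝ → ℝ} {I : ℝ}
    (h : IsRSIntegral T a b f g I) :
    Tendsto (fun τ : Tagged T a b => RSsum f g τ.1 τ.2.1) (refinementFilter T a b) (𝓝 I) := by
  refine Metric.tendsto_nhds.2 fun ε hε => ?_
  obtain ⟨P₀, hP₀⟩ := h ε hε
  exact mem_iInf_of_mem P₀ <| mem_principal.2 fun τ hτ => hP₀ τ.1 hτ τ.2.1 τ.2.2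

theorem IsSelection.mem_Icc_inter {T : Set ℝ} {a b : ℝ} {P : TSPartition T a b}
    {X : Fin P.n → ℝ} (hX : IsSelection P X) (i : Fin P.n) : X i ∈ Icc a b ∩ T :=
  ⟨⟨(P.t_mem_Icc _).1.trans (hX i).2.1, (hX i).2.2.le.trans (P.t_mem_Icc _).2⟩, (hX i).1⟩

theorem RSsum_mul_RSsum_le_of_similarlyOrdered {T : Set ℝ} {a b : ℝ} {p f₁ f₂ g : ℝ → ℝ}
    (hp : ∀ t ∈ Icc a b ∩ T, 0 ≤ p t)
    (hord : ∀ t ∈ Icc a b ∩ T, ∀ s ∈ Icc a b ∩ T, 0 ≤ (f₁ t - f₁ s) * (f₂ t - f₂ s))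
    (hg : MonotoneOn g (Icc a b ∩ T)) {P : TSPartition T a b} {X : Fin P.n → ℝ}
    (hX : IsSelection P X) :
    RSsum (fun t => p t * f₁ t) g P X * RSsum (fun t => p t * f₂ t) g P X ≤
      RSsum p g P X * RSsum (fun t => p t * f₁ t * f₂ t) g P X := by
  set c : Fin P.n → ℝ := fun i => p (X i) * (g (P.t i.succ) - g (P.t i.castSucc))
  have hweighted : ∀ f : ℝ → ℝ, RSsum (fun t => p t * f t) g P X = ∑ i, c i * f (X i) :=
    fun f => Finset.sum_congr rfl fun i _ => by ring
  have hassoc : (fun t => p t * f₁ t * f₂ t) = fun t => p t * (f₁ t * f₂ t) := by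
    simp only [mul_assoc]
  rw [hassoc, hweighted, hweighted, hweighted]
  exact Finset.univ.sum_mul_sum_le_sum_mul_sum_of_similarlyOrdered c (f₁ ∘ X) (f₂ ∘ X)
    (fun i _ => mul_nonneg (hp _ (hX.mem_Icc_inter i)) (P.increment_nonneg hg i))
    (fun i _ j _ => hord _ (hX.mem_Icc_inter i) _ (hX.mem_Icc_inter j))

theorem rs_chebyshev_general (T : Set ℝ) (a b : ℝ) (p f₁ f₂ g : ℝ → ℝ)
    (hp : ∀ t ∈ Set.Icc a b ∩ T, 0 ≤ p t)
    (hord : ∀ t ∈ Set.Icc a b ∩ T, ∀ s ∈ Set.Icc a b ∩ T,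
      0 ≤ (f₁ t - f₁ s) * (f₂ t - f₂ s))
    (hg : MonotoneOn g (Set.Icc a b ∩ T))
    (A B C D : ℝ)
    (hA : IsRSIntegral T a b p g A)
    (hB : IsRSIntegral T a b (fun t => p t * f₁ t * f₂ t) g B)
    (hC : IsRSIntegral T a b (fun t => p t * f₁ t) g C)
    (hD : IsRSIntegral T a b (fun t => p t * f₂ t) g D) :
    C * D ≤ A * B := by
  obtain ⟨P₀, -⟩ := hA 1 one_pos
  have : Nonempty (TSPartition T a b) := ⟨P₀⟩
  exact le_of_tendsto_of_tendsto' (hC.tendsto.mul hD.tendsto) (hA.tendsto.mul hB.tendsto)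
    fun τ => RSsum_mul_RSsum_le_of_similarlyOrdered hp hord hg τ.2.2

/-- Čebyšev's inequality for RS Δ-integrals:
`(∫ p Δg)(∫ p f₁ f₂ Δg) ≥ (∫ p f₁ Δg)(∫ p f₂ Δg)`. -/
theorem rs_chebyshev (T : Set ℝ) (hT : IsClosed T) (a b : ℝ)
    (ha : a ∈ T) (hb : b ∈ T) (hab : a < b) (p f₁ f₂ g : ℝ → ℝ)
    (hp : ∀ t ∈ Set.Icc a b ∩ T, 0 ≤ p t)
    (hpc : RdContinuousOn T a b p) (hf₁c : RdContinuousOn T a b f₁)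
    (hf₂c : RdContinuousOn T a b f₂)
    (hord : ∀ t ∈ Set.Icc a b ∩ T, ∀ s ∈ Set.Icc a b ∩ T,
      0 ≤ (f₁ t - f₁ s) * (f₂ t - f₂ s))
    (hg : MonotoneOn g (Set.Icc a b ∩ T))
    (A B C D : ℝ)
    (hA : IsRSIntegral T a b p g A)
    (hB : IsRSIntegral T a b (fun t => p t * f₁ t * f₂ t) g B)
    (hC : IsRSIntegral T a b (fun t => p t * f₁ t) g C)
    (hD : IsRSIntegral T a b (fun t => p t * f₂ t) g D) :
    C * D ≤ A * B :=
  rs_chebyshev_general T a b p f₁ f₂ g hp hord hg A B C D hA hB hC hD
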